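/- arXiv:1703.10567 — 3 statements merged into one kernel-verified Lean document; each statement's English description precedes it below -/
import Mathlib

section
/- Let N ≥ 3, β < N-2, b ≥ 0, m > 0, and μ(x) = |x|^{-β} e^{-b|x|^m}. Then for x ≠ 0, U_μ(x) = (c_0(N) - c_0(N-β))/|x|^2 - (1/4)b^2 m^2 |x|^{2m-2} + (1/2)bm(N+m-2-β)|x|^{m-2}, where c_0(s) = ((s-2)/2)^2. -/
/-!
Away from the origin the weight is `exp (g (‖y‖ ^ 2))` with `g t = -(β/2) log t - b t^(m/2)`.
A radial function `f (‖y‖ ^ 2)` has gradient `2 f' • y` and Laplacian `2 N f' + 4 ‖y‖² f''`; for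
`f = exp ∘ g` the factors `exp g` cancel in `U_μ`, which leaves
`U_μ(x) = -‖x‖² g'² - N g' - 2 ‖x‖² g''` at `t = ‖x‖²`. Expanding the powers of `‖x‖` gives the formula.
-/

open MeasureTheory Metric Filter Set

noncomputable section

/-- The Laplacian of a scalar function on Euclidean space. -/
def lap {N : ℕ} (f : EuclideanSpace ℝ (Fin N) → ℝ) (x : EuclideanSpace ℝ (Fin N)) : ℝ :=
  ∑ i, fderiv ℝ (fun y => fderiv ℝ f y (EuclideanSpace.single i 1)) x (EuclideanSpace.single i 1)

/-- The Schrödinger potential `U_μ = (1/4)|∇μ/μ|² - (1/2)Δμ/μ`. -/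
def Umu {N : ℕ} (μ : EuclideanSpace ℝ (Fin N) → ℝ) (x : EuclideanSpace ℝ (Fin N)) : ℝ :=
  (1 / 4) * ‖gradient μ x‖ ^ 2 / μ x ^ 2 - (1 / 2) * lap μ x / μ x

open Real Topology
open scoped RealInnerProductSpace

section Radial

variable {N : ℕ} {x : EuclideanSpace ℝ (Fin N)}

theorem lap_congr_of_eventuallyEq {f g : EuclideanSpace ℝ (Fin N) → ℝ} (h : f =ᶠ[𝓝 x] g) :
    lap f x = lap g x := by
  unfold lap
  refine Finset.sum_congr rfl fun i _ => ?_
  have hdir : (fun y => fderiv ℝ f y (EuclideanSpace.single i 1))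
      =ᶠ[𝓝 x] fun y => fderiv ℝ g y (EuclideanSpace.single i 1) :=
    (h.fderiv (𝕜 := ℝ)).mono fun y hy => by simp only [hy]
  rw [hdir.fderiv_eq]

theorem Umu_congr_of_eventuallyEq {μ ν : EuclideanSpace ℝ (Fin N) → ℝ} (h : μ =ᶠ[𝓝 x] ν) :
    Umu μ x = Umu ν x := by
  unfold Umu
  rw [h.gradient_eq, lap_congr_of_eventuallyEq h, h.eq_of_nhds]

variable {f f' : ℝ → ℝ} {d d' : ℝ}

theorem hasFDerivAt_comp_norm_sq (hf : HasDerivAt f d (‖x‖ ^ 2)) :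
    HasFDerivAt (fun y => f (‖y‖ ^ 2)) ((2 * d) • innerSL ℝ x) x := by
  refine (hf.comp_hasFDerivAt x (hasStrictFDerivAt_norm_sq x).hasFDerivAt).congr_fderiv ?_
  ext v
  simp only [smul_apply, coe_innerSL_apply, nsmul_eq_mul, Nat.cast_ofNat, smul_eq_mul]
  ring

theorem hasGradientAt_comp_norm_sq (hf : HasDerivAt f d (‖x‖ ^ 2)) :
    HasGradientAt (fun y => f (‖y‖ ^ 2)) ((2 * d) • x) x := by
  rw [hasGradientAt_iff_hasFDerivAt]
  refine (hasFDerivAt_comp_norm_sq hf).congr_fderiv ?_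
  ext v
  simp

theorem fderiv_fderiv_comp_norm_sq_apply (hf : ∀ᶠ t in 𝓝 (‖x‖ ^ 2), HasDerivAt f (f' t) t)
    (hf' : HasDerivAt f' d' (‖x‖ ^ 2)) (v : EuclideanSpace ℝ (Fin N)) :
    fderiv ℝ (fun y => fderiv ℝ (fun y => f (‖y‖ ^ 2)) y v) x v
      = 4 * d' * ⟪x, v⟫ ^ 2 + 2 * f' (‖x‖ ^ 2) * ‖v‖ ^ 2 := by
  have hnear : ∀ᶠ y in 𝓝 x, HasDerivAt f (f' (‖y‖ ^ 2)) (‖y‖ ^ 2) :=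
    ((continuous_norm.pow 2).continuousAt (x := x)).eventually hf
  have hfirst : (fun y => fderiv ℝ (fun y => f (‖y‖ ^ 2)) y v)
      =ᶠ[𝓝 x] fun y => 2 * f' (‖y‖ ^ 2) * innerSL ℝ v y := by
    filter_upwards [hnear] with y hy
    simp [(hasFDerivAt_comp_norm_sq hy).fderiv, real_inner_comm]
  have hsecond := ((hasFDerivAt_comp_norm_sq hf').const_mul 2).fun_mul (innerSL ℝ v).hasFDerivAt
  rw [hfirst.fderiv_eq, hsecond.fderiv]
  simp only [coe_innerSL_apply, real_inner_comm, add_apply, smul_apply, real_inner_self_eq_norm_sq,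
    smul_eq_mul]
  ring

theorem lap_comp_norm_sq (hf : ∀ᶠ t in 𝓝 (‖x‖ ^ 2), HasDerivAt f (f' t) t)
    (hf' : HasDerivAt f' d' (‖x‖ ^ 2)) :
    lap (fun y => f (‖y‖ ^ 2)) x = 2 * N * f' (‖x‖ ^ 2) + 4 * ‖x‖ ^ 2 * d' := by
  unfold lap
  rw [Finset.sum_congr rfl fun i _ => fderiv_fderiv_comp_norm_sq_apply hf hf' _]
  simp only [EuclideanSpace.inner_single_right, conj_trivial, one_mul, PiLp.norm_single, norm_one,
    one_pow, mul_one, Finset.sum_add_distrib, ← Finset.mul_sum, Finset.sum_const, Finset.card_univ,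
    Fintype.card_fin, nsmul_eq_mul, EuclideanSpace.real_norm_sq_eq]
  ring

variable {g g' : ℝ → ℝ}

theorem Umu_exp_comp_norm_sq (hg : ∀ᶠ t in 𝓝 (‖x‖ ^ 2), HasDerivAt g (g' t) t)
    (hg' : HasDerivAt g' d' (‖x‖ ^ 2)) :
    Umu (fun y => exp (g (‖y‖ ^ 2))) x
      = -(‖x‖ ^ 2 * g' (‖x‖ ^ 2) ^ 2) - N * g' (‖x‖ ^ 2) - 2 * ‖x‖ ^ 2 * d' := by
  have hf : ∀ᶠ t in 𝓝 (‖x‖ ^ 2), HasDerivAt (fun t => exp (g t)) (exp (g t) * g' t) t :=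
    hg.mono fun t ht => ht.exp
  have hf' : HasDerivAt (fun t => exp (g t) * g' t)
      (exp (g (‖x‖ ^ 2)) * (g' (‖x‖ ^ 2) ^ 2 + d')) (‖x‖ ^ 2) :=
    (hf.self_of_nhds.mul hg').congr_deriv (by ring)
  unfold Umu
  rw [(hasGradientAt_comp_norm_sq hf.self_of_nhds).gradient, lap_comp_norm_sq hf hf', norm_smul,
    Real.norm_eq_abs, mul_pow, sq_abs]
  field_simp
  ring

end Radial

def weightExponent (β b m t : ℝ) : ℝ := -(β / 2) * log t - b * t ^ (m / 2)

def weightExponentDeriv (β b m t : ℝ) : ℝ := -(β / 2) * t⁻¹ - b * (m / 2) * t ^ (m / 2 - 1)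

section WeightExponent

variable {β b m t : ℝ}

theorem hasDerivAt_weightExponent (ht : 0 < t) :
    HasDerivAt (weightExponent β b m) (weightExponentDeriv β b m t) t := by
  refine (((hasDerivAt_log ht.ne').const_mul (-(β / 2))).fun_sub
    ((hasDerivAt_rpow_const (p := m / 2) (Or.inl ht.ne')).const_mul b)).congr_deriv ?_
  rw [weightExponentDeriv]
  ring

theorem hasDerivAt_weightExponentDeriv (ht : 0 < t) :
    HasDerivAt (weightExponentDeriv β b m)
      (β / 2 * (t ^ 2)⁻¹ - b * (m / 2) * (m / 2 - 1) * t ^ (m / 2 - 2)) t := by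
  refine (((hasDerivAt_inv ht.ne').const_mul (-(β / 2))).fun_sub
    ((hasDerivAt_rpow_const (p := m / 2 - 1) (Or.inl ht.ne')).const_mul (b * (m / 2))))
    |>.congr_deriv ?_
  rw [show m / 2 - 1 - 1 = m / 2 - 2 by ring]
  ring

theorem rpow_neg_mul_exp_eq_exp_weightExponent {r : ℝ} (hr : 0 < r) :
    r ^ (-β) * exp (-b * r ^ m) = exp (weightExponent β b m (r ^ 2)) := by
  rw [rpow_def_of_pos hr, ← exp_add, weightExponent, log_pow, ← rpow_natCast_mul hr.le,
    Nat.cast_ofNat, mul_div_cancel₀ m two_ne_zero]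
  congr 1
  ring

end WeightExponent

theorem Umu_power_exp_weight_general (N : ℕ) (β b m : ℝ) :
    ∀ x : EuclideanSpace ℝ (Fin N), x ≠ 0 →
      Umu (fun y => ‖y‖ ^ (-β) * Real.exp (-b * ‖y‖ ^ m)) x =
        ((((N : ℝ) - 2) / 2) ^ 2 - (((N : ℝ) - β - 2) / 2) ^ 2) / ‖x‖ ^ 2
          - (1 / 4) * b ^ 2 * m ^ 2 * ‖x‖ ^ (2 * m - 2)
          + (1 / 2) * b * m * ((N : ℝ) + m - 2 - β) * ‖x‖ ^ (m - 2) := by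
  intro x hx
  have hr : 0 < ‖x‖ := norm_pos_iff.mpr hx
  have ht : 0 < ‖x‖ ^ 2 := by positivity
  have hμ : (fun y : EuclideanSpace ℝ (Fin N) => ‖y‖ ^ (-β) * exp (-b * ‖y‖ ^ m))
      =ᶠ[𝓝 x] fun y => exp (weightExponent β b m (‖y‖ ^ 2)) := by
    filter_upwards [isOpen_ne.mem_nhds hx] with y hy
    exact rpow_neg_mul_exp_eq_exp_weightExponent (norm_pos_iff.mpr hy)
  rw [Umu_congr_of_eventuallyEq hμ, Umu_exp_comp_norm_sq
    (eventually_of_mem (Ioi_mem_nhds ht) fun t ht => hasDerivAt_weightExponent ht)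
    (hasDerivAt_weightExponentDeriv ht)]
  have e1 : (‖x‖ ^ 2) ^ (m / 2 - 1) = ‖x‖ ^ (m - 2) := by
    rw [← rpow_natCast_mul hr.le]
    congr 1
    push_cast
    ring
  have e2 : (‖x‖ ^ 2) ^ (m / 2 - 2) = ‖x‖ ^ (m - 2) / ‖x‖ ^ 2 := by
    rw [← rpow_natCast_mul hr.le, ← rpow_two, ← rpow_sub hr]
    congr 1
    push_cast
    ring
  have e3 : ‖x‖ ^ (2 * m - 2) = (‖x‖ ^ (m - 2)) ^ 2 * ‖x‖ ^ 2 := by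
    rw [← rpow_two, ← rpow_two, ← rpow_mul hr.le, ← rpow_add hr]
    congr 1
    ring
  simp only [weightExponentDeriv, e1, e2, e3]
  field_simp
  ring

/-- For `μ(x) = |x|^{-β} exp(-b|x|^m)` one has
`U_μ(x) = (c₀(N) - c₀(N-β))/|x|² - (1/4)b²m²|x|^{2m-2} + (1/2)bm(N+m-2-β)|x|^{m-2}`,
where `c₀(s) = ((s-2)/2)²`. -/
theorem Umu_power_exp_weight (N : ℕ) (hN : 3 ≤ N) (β b m : ℝ)
    (hβ : β < (N : ℝ) - 2) (hb : 0 ≤ b) (hm : 0 < m) :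
    ∀ x : EuclideanSpace ℝ (Fin N), x ≠ 0 →
      Umu (fun y => ‖y‖ ^ (-β) * Real.exp (-b * ‖y‖ ^ m)) x =
        ((((N : ℝ) - 2) / 2) ^ 2 - (((N : ℝ) - β - 2) / 2) ^ 2) / ‖x‖ ^ 2
          - (1 / 4) * b ^ 2 * m ^ 2 * ‖x‖ ^ (2 * m - 2)
          + (1 / 2) * b * m * ((N : ℝ) + m - 2 - β) * ‖x‖ ^ (m - 2) :=
  Umu_power_exp_weight_general N β b m
end
end

section
/- Let dμ = μ(x)dx be a positive measure on ℝ^N and suppose c > 0 and γ ∈ ℝ satisfy γ^2 < c, |x|^{2γ} 1_{B_2} ∈ L^1(dμ), and ∫_{B_1 \ B_{1/n}} |x|^{2γ-2} dμ → ∞ as n → ∞. Then the bottom of the spectrum λ_1 = inf over nonzero φ ∈ H^1_μ of (∫(|∇φ|^2 - c φ^2/|x|^2)dμ)/(∫ φ^2 dμ) equals -∞; i.e., there is no constant C with c ∫ φ^2/|x|^2 dμ ≤ ∫ |∇φ|^2 dμ + C ∫ φ^2 dμ for all φ ∈ H^1_μ. -/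
open MeasureTheory Metric Filter Set Topology

/-! Take as test functions the truncated powers `φₙ = ‖x‖^γ · 1_{Aₙ}` on the annuli
`Aₙ = B₁ \ B_{1/n}`. Off the null set `∂Aₙ` the function `φₙ` is locally `‖x‖^γ` or `0`, and
`‖∇‖x‖^γ‖² ≤ γ² ‖x‖^(2γ-2)`, so the numerator of the Rayleigh quotient is at most
`(γ² - c) ∫_{Aₙ} ‖x‖^(2γ-2) dμ → -∞`, while the denominator `∫_{Aₙ} ‖x‖^(2γ) dμ` stays in
`(0, ∫_{B₂} ‖x‖^(2γ) dμ]`; it is positive because it dominates `n⁻² ∫_{Aₙ} ‖x‖^(2γ-2) dμ`. -/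

section Indicator

variable {X M : Type*} [TopologicalSpace X] [Zero M] {s : Set X} {f : X → M} {x : X}

lemma indicator_eventuallyEq_of_mem_interior (hx : x ∈ interior s) : s.indicator f =ᶠ[𝓝 x] f :=
  eventually_of_mem (mem_interior_iff_mem_nhds.1 hx) fun _ hy => indicator_of_mem hy f

lemma indicator_eventuallyEq_zero_of_notMem_closure (hx : x ∉ closure s) :
    s.indicator f =ᶠ[𝓝 x] 0 :=
  eventually_of_mem (isClosed_closure.isOpen_compl.mem_nhds hx) fun _ hy =>
    indicator_of_notMem (fun h => hy (subset_closure h)) f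

end Indicator

lemma ae_differentiableAt_indicator {𝕜 E F : Type*} [NontriviallyNormedField 𝕜]
    [NormedAddCommGroup E] [NormedSpace 𝕜 E] [NormedAddCommGroup F] [NormedSpace 𝕜 F]
    [MeasurableSpace E] {ν : Measure E} {s : Set E} {f : E → F} (hs : ν (frontier s) = 0)
    (hf : ∀ x ∈ interior s, DifferentiableAt 𝕜 f x) :
    ∀ᵐ x ∂ν, DifferentiableAt 𝕜 (s.indicator f) x := by
  filter_upwards [measure_eq_zero_iff_ae_notMem.1 hs] with x hx
  by_cases hxs : x ∈ interior s
  · exact (hf x hxs).congr_of_eventuallyEq (indicator_eventuallyEq_of_mem_interior hxs)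
  · exact (differentiableAt_const 0).congr_of_eventuallyEq
      (indicator_eventuallyEq_zero_of_notMem_closure fun h => hx ⟨h, hxs⟩)

lemma frontier_diff_subset {X : Type*} [TopologicalSpace X] (s t : Set X) :
    frontier (s \ t) ⊆ frontier s ∪ frontier t := by
  rw [sdiff_eq, ← frontier_compl t]
  exact (frontier_inter_subset s tᶜ).trans (union_subset_union inter_subset_left inter_subset_right)

lemma addHaar_frontier_ball_diff_ball {E : Type*} [NormedAddCommGroup E] [NormedSpace ℝ E]
    [FiniteDimensional ℝ E] [MeasurableSpace E] [BorelSpace E] (ν : Measure E)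
    [ν.IsAddHaarMeasure] (x : E) {R r : ℝ} (hR : R ≠ 0) (hr : r ≠ 0) :
    ν (frontier (ball x R \ ball x r)) = 0 :=
  measure_mono_null ((frontier_diff_subset _ _).trans
      (union_subset_union frontier_ball_subset_sphere frontier_ball_subset_sphere))
    (measure_union_null (ν.addHaar_sphere_of_ne_zero x hR) (ν.addHaar_sphere_of_ne_zero x hr))

section WeightedIntegrals

variable {E : Type*} [NormedAddCommGroup E] {s : Set E}

lemma indicator_norm_rpow_sq_mul (γ : ℝ) (μ : E → ℝ) :
    (fun x => s.indicator (fun y => ‖y‖ ^ γ) x ^ 2 * μ x) =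
      s.indicator fun x => ‖x‖ ^ (2 * γ) * μ x := by
  ext x
  by_cases hx : x ∈ s
  · rw [indicator_of_mem hx, indicator_of_mem hx, ← Real.rpow_mul_natCast (norm_nonneg x),
      Nat.cast_ofNat, mul_comm γ]
  · simp [hx]

lemma indicator_norm_rpow_sq_div_sq_mul (hs : (0 : E) ∉ s) (γ : ℝ) (μ : E → ℝ) :
    (fun x => s.indicator (fun y => ‖y‖ ^ γ) x ^ 2 / ‖x‖ ^ 2 * μ x) =
      s.indicator fun x => ‖x‖ ^ (2 * γ - 2) * μ x := by
  ext x
  by_cases hx : x ∈ s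
  · have hx0 : 0 < ‖x‖ := norm_pos_iff.2 fun h => hs (h ▸ hx)
    rw [indicator_of_mem hx, indicator_of_mem hx, ← Real.rpow_mul_natCast hx0.le,
      Real.rpow_sub hx0, Real.rpow_two, Nat.cast_ofNat, mul_comm γ]
  · simp [hx]

variable [MeasurableSpace E] {ν : Measure E} {μ : E → ℝ}

lemma setIntegral_norm_rpow_sub_two_mul_le {r a : ℝ} (hr : 0 < r) (hs : MeasurableSet s)
    (hsr : ∀ x ∈ s, r ≤ ‖x‖) (hμ : ∀ x, 0 ≤ μ x)
    (hp : IntegrableOn (fun x => ‖x‖ ^ (a - 2) * μ x) s ν)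
    (hg : IntegrableOn (fun x => ‖x‖ ^ a * μ x) s ν) :
    ∫ x in s, ‖x‖ ^ (a - 2) * μ x ∂ν ≤ (r ^ 2)⁻¹ * ∫ x in s, ‖x‖ ^ a * μ x ∂ν := by
  rw [← integral_const_mul]
  refine setIntegral_mono_on hp (hg.const_mul _) hs fun x hx => ?_
  have hx0 : 0 < ‖x‖ := hr.trans_le (hsr x hx)
  calc ‖x‖ ^ (a - 2) * μ x = ‖x‖ ^ a / ‖x‖ ^ 2 * μ x := by rw [Real.rpow_sub hx0, Real.rpow_two]
    _ ≤ ‖x‖ ^ a / r ^ 2 * μ x := by have := hμ x; have := hsr x hx; gcongr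
    _ = (r ^ 2)⁻¹ * (‖x‖ ^ a * μ x) := by ring

lemma aestronglyMeasurable_of_norm_rpow_mul [BorelSpace E] {a : ℝ} (hs : MeasurableSet s)
    (hs0 : 0 ∉ s) (h : AEStronglyMeasurable (fun x => ‖x‖ ^ a * μ x) (ν.restrict s)) :
    AEStronglyMeasurable μ (ν.restrict s) := by
  refine ((measurable_norm.pow_const (-a)).aestronglyMeasurable.mul h).congr ?_
  filter_upwards [ae_restrict_mem hs] with x hx
  have hx0 : 0 < ‖x‖ := norm_pos_iff.2 fun h => hs0 (h ▸ hx)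
  show ‖x‖ ^ (-a) * (‖x‖ ^ a * μ x) = μ x
  rw [← mul_assoc, ← Real.rpow_add hx0, neg_add_cancel, Real.rpow_zero, one_mul]

end WeightedIntegrals

section Gradient

variable {E : Type*} [NormedAddCommGroup E] [InnerProductSpace ℝ E] {s : Set E} {f : E → ℝ}

lemma differentiableAt_norm_rpow (γ : ℝ) {x : E} (hx : x ≠ 0) :
    DifferentiableAt ℝ (fun y : E => ‖y‖ ^ γ) x :=
  (differentiableAt_id.norm ℝ hx).rpow_const (Or.inl (norm_ne_zero_iff.2 hx))

variable [CompleteSpace E]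

lemma gradient_indicator_ae_eq [MeasurableSpace E] {ν : Measure E} (hs : ν (frontier s) = 0) :
    gradient (s.indicator f) =ᵐ[ν] s.indicator (gradient f) := by
  filter_upwards [measure_eq_zero_iff_ae_notMem.1 hs] with x hx
  by_cases hxs : x ∈ interior s
  · rw [(indicator_eventuallyEq_of_mem_interior hxs).gradient_eq,
      indicator_of_mem (interior_subset hxs)]
  · have hx' : x ∉ closure s := fun h => hx ⟨h, hxs⟩
    rw [(indicator_eventuallyEq_zero_of_notMem_closure hx').gradient_eq,
      indicator_of_notMem fun h => hx' (subset_closure h)]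
    exact gradient_fun_const x 0

lemma norm_gradient_indicator_sq_mul_ae_eq [MeasurableSpace E] {ν : Measure E}
    (hs : ν (frontier s) = 0) (μ : E → ℝ) :
    (fun x => ‖gradient (s.indicator f) x‖ ^ 2 * μ x) =ᵐ[ν]
      s.indicator fun x => ‖gradient f x‖ ^ 2 * μ x := by
  filter_upwards [gradient_indicator_ae_eq (f := f) hs] with x hx
  by_cases hxs : x ∈ s <;> simp [hx, hxs]

lemma norm_gradient_norm_rpow_le (γ : ℝ) {x : E} (hx : x ≠ 0) :
    ‖gradient (fun y : E => ‖y‖ ^ γ) x‖ ≤ |γ| * ‖x‖ ^ (γ - 1) := by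
  have hnorm : HasFDerivAt (fun y : E => ‖y‖) (fderiv ℝ (fun y : E => ‖y‖) x) x :=
    (differentiableAt_id.norm ℝ hx).hasFDerivAt
  have hcomp : HasFDerivAt (fun y : E => ‖y‖ ^ γ)
      ((γ * ‖x‖ ^ (γ - 1)) • fderiv ℝ (fun y : E => ‖y‖) x) x :=
    (Real.hasDerivAt_rpow_const (Or.inl (norm_ne_zero_iff.2 hx))).comp_hasFDerivAt x hnorm
  have hlip : ‖fderiv ℝ (fun y : E => ‖y‖) x‖ ≤ 1 := by
    simpa using hnorm.le_of_lipschitz lipschitzWith_one_norm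
  rw [gradient, LinearIsometryEquiv.norm_map, hcomp.fderiv, norm_smul, Real.norm_eq_abs, abs_mul,
    abs_of_nonneg (Real.rpow_nonneg (norm_nonneg x) _)]
  exact mul_le_of_le_one_right (by positivity) hlip

lemma norm_gradient_norm_rpow_sq_le (γ : ℝ) {x : E} (hx : x ≠ 0) :
    ‖gradient (fun y : E => ‖y‖ ^ γ) x‖ ^ 2 ≤ γ ^ 2 * ‖x‖ ^ (2 * γ - 2) := by
  calc ‖gradient (fun y : E => ‖y‖ ^ γ) x‖ ^ 2 ≤ (|γ| * ‖x‖ ^ (γ - 1)) ^ 2 :=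
        pow_le_pow_left₀ (norm_nonneg _) (norm_gradient_norm_rpow_le γ hx) 2
    _ = γ ^ 2 * ‖x‖ ^ (2 * γ - 2) := by
        rw [mul_pow, sq_abs, ← Real.rpow_mul_natCast (norm_nonneg x)]
        ring_nf

variable [MeasurableSpace E] [BorelSpace E] {ν : Measure E} {μ : E → ℝ} {γ : ℝ}

lemma integrableOn_norm_gradient_norm_rpow_sq_mul (hs : MeasurableSet s) (hs0 : 0 ∉ s)
    (hμ : ∀ x, 0 ≤ μ x) (hp : IntegrableOn (fun x => ‖x‖ ^ (2 * γ - 2) * μ x) s ν) :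
    IntegrableOn (fun x => ‖gradient (fun y : E => ‖y‖ ^ γ) x‖ ^ 2 * μ x) s ν := by
  have hmeas : Measurable (gradient fun y : E => ‖y‖ ^ γ) :=
    (InnerProductSpace.toDual ℝ E).symm.continuous.measurable.comp (measurable_fderiv ℝ _)
  refine Integrable.mono' (hp.const_mul (γ ^ 2))
    ((hmeas.norm.pow_const 2).aestronglyMeasurable.mul
      (aestronglyMeasurable_of_norm_rpow_mul hs hs0 hp.aestronglyMeasurable)) ?_
  filter_upwards [ae_restrict_mem hs] with x hx
  rw [Real.norm_of_nonneg (by have := hμ x; positivity), ← mul_assoc]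
  exact mul_le_mul_of_nonneg_right (norm_gradient_norm_rpow_sq_le γ (ne_of_mem_of_not_mem hx hs0))
    (hμ x)

lemma setIntegral_norm_gradient_norm_rpow_sq_mul_le (hs : MeasurableSet s) (hs0 : 0 ∉ s)
    (hμ : ∀ x, 0 ≤ μ x) (hp : IntegrableOn (fun x => ‖x‖ ^ (2 * γ - 2) * μ x) s ν) :
    ∫ x in s, ‖gradient (fun y : E => ‖y‖ ^ γ) x‖ ^ 2 * μ x ∂ν ≤
      γ ^ 2 * ∫ x in s, ‖x‖ ^ (2 * γ - 2) * μ x ∂ν := by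
  rw [← integral_const_mul]
  refine setIntegral_mono_on (integrableOn_norm_gradient_norm_rpow_sq_mul hs hs0 hμ hp)
    (hp.const_mul _) hs fun x hx => ?_
  rw [← mul_assoc]
  exact mul_le_mul_of_nonneg_right (norm_gradient_norm_rpow_sq_le γ (ne_of_mem_of_not_mem hx hs0))
    (hμ x)

lemma integral_norm_gradient_sq_sub_hardy_le (hs : MeasurableSet s) (hs0 : 0 ∉ s)
    (hfr : ν (frontier s) = 0) (hμ : ∀ x, 0 ≤ μ x)
    (hp : IntegrableOn (fun x => ‖x‖ ^ (2 * γ - 2) * μ x) s ν) (c : ℝ) :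
    (∫ x, ‖gradient (s.indicator fun y => ‖y‖ ^ γ) x‖ ^ 2 * μ x ∂ν) -
        c * ∫ x, s.indicator (fun y => ‖y‖ ^ γ) x ^ 2 / ‖x‖ ^ 2 * μ x ∂ν ≤
      (γ ^ 2 - c) * ∫ x in s, ‖x‖ ^ (2 * γ - 2) * μ x ∂ν := by
  rw [integral_congr_ae (norm_gradient_indicator_sq_mul_ae_eq hfr μ),
    indicator_norm_rpow_sq_div_sq_mul hs0, integral_indicator hs, integral_indicator hs]
  linarith [setIntegral_norm_gradient_norm_rpow_sq_mul_le hs hs0 hμ hp]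

lemma rayleigh_quotient_indicator_norm_rpow_lt (hs : MeasurableSet s) (hs0 : 0 ∉ s)
    (hfr : ν (frontier s) = 0) (hμ : ∀ x, 0 ≤ μ x)
    (hg : IntegrableOn (fun x => ‖x‖ ^ (2 * γ) * μ x) s ν)
    (hp : IntegrableOn (fun x => ‖x‖ ^ (2 * γ - 2) * μ x) s ν)
    (hD : 0 < ∫ x in s, ‖x‖ ^ (2 * γ) * μ x ∂ν) {c C : ℝ}
    (hlt : (γ ^ 2 - c) * ∫ x in s, ‖x‖ ^ (2 * γ - 2) * μ x ∂ν <
      C * ∫ x in s, ‖x‖ ^ (2 * γ) * μ x ∂ν) :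
    let φ := s.indicator fun y => ‖y‖ ^ γ
    (∀ᵐ x ∂ν, DifferentiableAt ℝ φ x) ∧
      Integrable (fun x => φ x ^ 2 * μ x) ν ∧
      Integrable (fun x => ‖gradient φ x‖ ^ 2 * μ x) ν ∧
      Integrable (fun x => φ x ^ 2 / ‖x‖ ^ 2 * μ x) ν ∧
      0 < ∫ x, φ x ^ 2 * μ x ∂ν ∧
      (∫ x, ‖gradient φ x‖ ^ 2 * μ x ∂ν) - c * (∫ x, φ x ^ 2 / ‖x‖ ^ 2 * μ x ∂ν) <
        C * ∫ x, φ x ^ 2 * μ x ∂ν := by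
  refine ⟨ae_differentiableAt_indicator hfr fun x hx =>
    differentiableAt_norm_rpow γ (ne_of_mem_of_not_mem (interior_subset hx) hs0), ?_, ?_, ?_, ?_, ?_⟩
  · rw [indicator_norm_rpow_sq_mul]; exact hg.integrable_indicator hs
  · exact ((integrableOn_norm_gradient_norm_rpow_sq_mul hs hs0 hμ hp).integrable_indicator hs).congr
      (norm_gradient_indicator_sq_mul_ae_eq hfr μ).symm
  · rw [indicator_norm_rpow_sq_div_sq_mul hs0]; exact hp.integrable_indicator hs
  · rwa [indicator_norm_rpow_sq_mul, integral_indicator hs]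
  · rw [indicator_norm_rpow_sq_mul, integral_indicator hs]
    exact (integral_norm_gradient_sq_sub_hardy_le hs hs0 hfr hμ hp c).trans_lt hlt

end Gradient

theorem bottom_of_spectrum_neg_infty_general (N : ℕ)
    (μ : EuclideanSpace ℝ (Fin N) → ℝ) (hμ : ∀ x, 0 ≤ μ x)
    (c γ : ℝ) (hγc : γ ^ 2 < c)
    (hint : IntegrableOn (fun x => ‖x‖ ^ (2 * γ) * μ x)
      (ball (0 : EuclideanSpace ℝ (Fin N)) 2))
    (hdiv : Tendsto (fun n : ℕ =>
        ∫ x in ball (0 : EuclideanSpace ℝ (Fin N)) 1 \ ball 0 (1 / n),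
          ‖x‖ ^ (2 * γ - 2) * μ x) atTop atTop) :
    ∀ C : ℝ, ∃ φ : EuclideanSpace ℝ (Fin N) → ℝ,
      (∀ᵐ x : EuclideanSpace ℝ (Fin N), DifferentiableAt ℝ φ x) ∧
      Integrable (fun x => φ x ^ 2 * μ x) ∧
      Integrable (fun x => ‖gradient φ x‖ ^ 2 * μ x) ∧
      Integrable (fun x => φ x ^ 2 / ‖x‖ ^ 2 * μ x) ∧
      0 < ∫ x, φ x ^ 2 * μ x ∧
      (∫ x, ‖gradient φ x‖ ^ 2 * μ x) - c * (∫ x, φ x ^ 2 / ‖x‖ ^ 2 * μ x) <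
        C * ∫ x, φ x ^ 2 * μ x := by
  intro C
  set M := ∫ x in ball (0 : EuclideanSpace ℝ (Fin N)) 2, ‖x‖ ^ (2 * γ) * μ x
  have hM : 0 ≤ M := setIntegral_nonneg measurableSet_ball fun x _ => by have := hμ x; positivity
  obtain ⟨n, hlarge, hn⟩ := (((hdiv.const_mul_atTop_of_neg (sub_neg.2 hγc)).eventually_lt_atBot
    (min C 0 * M)).and (eventually_gt_atTop 0)).exists
  set A := ball (0 : EuclideanSpace ℝ (Fin N)) 1 \ ball 0 (1 / n)
  have hr : (0 : ℝ) < 1 / n := by positivity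
  have hA2 : A ⊆ ball 0 2 := sdiff_subset.trans (ball_subset_ball one_le_two)
  have hg : IntegrableOn (fun x => ‖x‖ ^ (2 * γ) * μ x) A := hint.mono_set hA2
  have hI : 0 < ∫ x in A, ‖x‖ ^ (2 * γ - 2) * μ x := pos_of_mul_neg_right
    (hlarge.trans_le (mul_nonpos_of_nonpos_of_nonneg (min_le_right C 0) hM)) (sub_neg.2 hγc).le
  -- the Bochner integral of a non-integrable function is `0`
  have hp : IntegrableOn (fun x => ‖x‖ ^ (2 * γ - 2) * μ x) A := .of_integral_ne_zero hI.ne'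
  have hA : MeasurableSet A := measurableSet_ball.diff measurableSet_ball
  have hD : 0 < ∫ x in A, ‖x‖ ^ (2 * γ) * μ x :=
    pos_of_mul_pos_right (hI.trans_le (setIntegral_norm_rpow_sub_two_mul_le hr hA
      (fun x hx => not_lt.1 (mem_ball_zero_iff.not.1 hx.2)) hμ hp hg)) (by positivity)
  refine ⟨_, rayleigh_quotient_indicator_norm_rpow_lt hA (fun h => h.2 (mem_ball_self hr))
    (addHaar_frontier_ball_diff_ball volume 0 one_ne_zero hr.ne') hμ hg hp hD ?_⟩
  calc _ < min C 0 * M := hlarge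
    _ ≤ min C 0 * ∫ x in A, ‖x‖ ^ (2 * γ) * μ x := mul_le_mul_of_nonpos_left
        (setIntegral_mono_set hint (ae_of_all _ fun x => by have := hμ x; positivity)
          hA2.eventuallyLE) (min_le_right _ _)
    _ ≤ _ := mul_le_mul_of_nonneg_right (min_le_left _ _) hD.le

/-- If `γ² < c`, `|x|^{2γ} ∈ L¹(B₂, dμ)` and `∫_{B₁ \ B_{1/n}} |x|^{2γ-2} dμ → ∞`,
then the bottom of the spectrum of `-(L + c/|x|²)` is `-∞`: no weighted Hardy
inequality with constant `c` can hold. -/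
theorem bottom_of_spectrum_neg_infty (N : ℕ) (hN : 1 ≤ N)
    (μ : EuclideanSpace ℝ (Fin N) → ℝ) (hμ : ∀ x, 0 ≤ μ x)
    (c γ : ℝ) (hc : 0 < c) (hγc : γ ^ 2 < c)
    (hint : IntegrableOn (fun x => ‖x‖ ^ (2 * γ) * μ x)
      (ball (0 : EuclideanSpace ℝ (Fin N)) 2))
    (hdiv : Tendsto (fun n : ℕ =>
        ∫ x in ball (0 : EuclideanSpace ℝ (Fin N)) 1 \ ball 0 (1 / n),
          ‖x‖ ^ (2 * γ - 2) * μ x) atTop atTop) :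
    ∀ C : ℝ, ∃ φ : EuclideanSpace ℝ (Fin N) → ℝ,
      (∀ᵐ x : EuclideanSpace ℝ (Fin N), DifferentiableAt ℝ φ x) ∧
      Integrable (fun x => φ x ^ 2 * μ x) ∧
      Integrable (fun x => ‖gradient φ x‖ ^ 2 * μ x) ∧
      Integrable (fun x => φ x ^ 2 / ‖x‖ ^ 2 * μ x) ∧
      0 < ∫ x, φ x ^ 2 * μ x ∧
      (∫ x, ‖gradient φ x‖ ^ 2 * μ x) - c * (∫ x, φ x ^ 2 / ‖x‖ ^ 2 * μ x) <
        C * ∫ x, φ x ^ 2 * μ x :=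
  bottom_of_spectrum_neg_infty_general N μ hμ c γ hγc hint hdiv
end

section
/- Let dμ be a positive measure on ℝ^N with density μ ∈ L^1_loc, and define N_0 = sup{δ ∈ ℝ : |x|^{-δ} ∈ L^1_loc(dμ)}. If c > c_0(N_0) = ((N_0-2)/2)^2, then the weighted Hardy inequality c ∫ φ^2/|x|^2 dμ ≤ ∫ |∇φ|^2 dμ + C ∫ φ^2 dμ fails for every constant C; i.e., inf_{φ ∈ H^1_μ \ {0}} (∫ |∇φ|^2 dμ - c∫ φ^2/|x|^2 dμ)/(∫ φ^2 dμ) = -∞. -/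
/-!
Fix exponents `-N₀/2 < γ < (2 - N₀)/2 < α` with `γ² < c` and `α² < c` (possible because
`c > ((N₀ - 2)/2)²`). By the definition of `N₀`, `|x|^(2γ)` and `|x|^(2α-2)` are locally
`μ`-integrable while `|x|^(2γ-2)` is not near the origin. The radial test function equal to
`|x|^γ` on `a < |x| ≤ 1`, to `a^(γ-α) |x|^α` on `|x| ≤ a`, and to `2 - |x|` on `1 < |x| ≤ 2`
satisfies `|∇φ|² = γ² φ²/|x|²` on the annulus and `|∇φ|² = α² φ²/|x|²` inside, so
`c ∫ φ²/|x|² dμ - ∫ |∇φ|² dμ ≥ (c - γ²) ∫_{a<|x|≤1} |x|^(2γ-2) dμ - μ(B₂)`, which tends to `+∞`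
as `a → 0`, while `∫ φ² dμ ≤ ∫_{B₁} |x|^(2γ) dμ + μ(B₂)` stays bounded.
-/

open MeasureTheory Metric Filter Set Topology

section RadialCalculus

variable {E : Type*} [NormedAddCommGroup E] [InnerProductSpace ℝ E] {g : ℝ → ℝ} {g' : ℝ} {x : E}

theorem hasFDerivAt_norm_of_ne_zero (hx : x ≠ 0) :
    HasFDerivAt (fun y : E => ‖y‖) (‖x‖⁻¹ • innerSL ℝ x) x := by
  have h := (hasStrictFDerivAt_norm_sq x).hasFDerivAt.sqrt (by positivity)
  simp only [Real.sqrt_sq (norm_nonneg _)] at h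
  refine h.congr_fderiv ?_
  ext y
  simp only [one_div, mul_inv_rev, smul_apply, coe_innerSL_apply,
    nsmul_eq_mul, Nat.cast_ofNat, smul_eq_mul]
  field_simp

theorem HasDerivAt.hasGradientAt_comp_norm [CompleteSpace E] (hg : HasDerivAt g g' ‖x‖)
    (hx : x ≠ 0) :
    HasGradientAt (fun y => g ‖y‖) ((g' / ‖x‖) • x) x := by
  rw [hasGradientAt_iff_hasFDerivAt]
  refine (hg.comp_hasFDerivAt x (hasFDerivAt_norm_of_ne_zero hx)).congr_fderiv ?_
  ext y
  simp [div_eq_mul_inv, mul_comm, mul_left_comm]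

theorem norm_gradient_comp_norm [CompleteSpace E] (hg : DifferentiableAt ℝ g ‖x‖) (hx : x ≠ 0) :
    ‖gradient (fun y => g ‖y‖) x‖ = |deriv g ‖x‖| := by
  rw [hg.hasDerivAt.hasGradientAt_comp_norm hx |>.gradient, norm_smul, Real.norm_eq_abs,
    abs_div, abs_norm, div_mul_cancel₀ _ (norm_ne_zero_iff.mpr hx)]

end RadialCalculus

theorem Real.rpow_sq_eq {r : ℝ} (hr : 0 ≤ r) (p : ℝ) : (r ^ p) ^ 2 = r ^ (2 * p) := by
  rw [← Real.rpow_mul_natCast hr, mul_comm]; norm_num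

theorem Real.rpow_sq_div_sq {r : ℝ} (hr : 0 < r) (p : ℝ) :
    (r ^ p) ^ 2 / r ^ 2 = r ^ (2 * p - 2) := by
  rw [Real.rpow_sq_eq hr.le, Real.rpow_sub hr, Real.rpow_two]

theorem exists_exponents_of_sq_lt {N₀ c : ℝ} (hc : ((N₀ - 2) / 2) ^ 2 < c) :
    ∃ γ α : ℝ, -N₀ / 2 < γ ∧ γ < (2 - N₀) / 2 ∧ (2 - N₀) / 2 < α ∧ γ ^ 2 < c ∧ α ^ 2 < c := by
  have ht : (2 - N₀) / 2 ∈ {s : ℝ | s ^ 2 < c} := by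
    rw [mem_ofPred_eq]; convert hc using 1; ring
  obtain ⟨ε, hε, hball⟩ :=
    isOpen_iff.mp (isOpen_lt (continuous_pow 2) continuous_const) _ ht
  have hε' : 0 < min ε 1 := lt_min hε one_pos
  refine ⟨(2 - N₀) / 2 - min ε 1 / 2, (2 - N₀) / 2 + ε / 2, by linarith [min_le_right ε 1],
    by linarith, by linarith, hball ?_, hball ?_⟩ <;> rw [mem_ball, Real.dist_eq, abs_lt] <;>
    constructor <;> linarith [min_le_left ε 1]

noncomputable def hardyProfile (a α γ r : ℝ) : ℝ :=
  if r ≤ a then a ^ (γ - α) * r ^ α else if r ≤ 1 then r ^ γ else if r ≤ 2 then 2 - r else 0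

namespace hardyProfile

variable {a α γ r : ℝ}

theorem measurable (a α γ : ℝ) : Measurable (hardyProfile a α γ) := by
  refine Measurable.ite measurableSet_Iic (by fun_prop) <| Measurable.ite measurableSet_Iic
    (by fun_prop) <| Measurable.ite measurableSet_Iic (by fun_prop) measurable_const

theorem of_le (h : r ≤ a) : hardyProfile a α γ r = a ^ (γ - α) * r ^ α := if_pos h

theorem of_mem_Ioc (h : r ∈ Ioc a 1) : hardyProfile a α γ r = r ^ γ := by
  simp [hardyProfile, not_le.mpr h.1, h.2]

theorem of_mem_Ioc_one_two (ha : a < 1) (h : r ∈ Ioc 1 2) : hardyProfile a α γ r = 2 - r := by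
  simp [hardyProfile, not_le.mpr (ha.trans h.1), not_le.mpr h.1, h.2]

theorem of_two_lt (ha : a < 1) (h : 2 < r) : hardyProfile a α γ r = 0 := by
  simp [hardyProfile, show ¬ r ≤ a by linarith, show ¬ r ≤ 1 by linarith, not_le.mpr h]

theorem hasDerivAt_of_lt (hr : 0 < r) (h : r < a) :
    HasDerivAt (hardyProfile a α γ) (α * hardyProfile a α γ r / r) r := by
  have hd := (Real.hasDerivAt_rpow_const (p := α) (Or.inl hr.ne')).const_mul (a ^ (γ - α))
  refine (hd.congr_of_eventuallyEq ?_).congr_deriv ?_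
  · filter_upwards [Iio_mem_nhds h] with s hs using of_le (le_of_lt hs)
  · rw [of_le h.le, Real.rpow_sub_one hr.ne']; ring

theorem hasDerivAt_of_mem_Ioo (ha : 0 < a) (h : r ∈ Ioo a 1) :
    HasDerivAt (hardyProfile a α γ) (γ * hardyProfile a α γ r / r) r := by
  have hr : 0 < r := ha.trans h.1
  have hd := Real.hasDerivAt_rpow_const (p := γ) (Or.inl hr.ne')
  refine (hd.congr_of_eventuallyEq ?_).congr_deriv ?_
  · filter_upwards [Ioo_mem_nhds h.1 h.2] with s hs using of_mem_Ioc (Ioo_subset_Ioc_self hs)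
  · rw [of_mem_Ioc (Ioo_subset_Ioc_self h), Real.rpow_sub_one hr.ne']; ring

theorem hasDerivAt_of_mem_Ioo_one_two (ha : a < 1) (h : r ∈ Ioo 1 2) :
    HasDerivAt (hardyProfile a α γ) (-1) r := by
  refine ((hasDerivAt_id r).const_sub 2).congr_of_eventuallyEq ?_
  filter_upwards [Ioo_mem_nhds h.1 h.2] with s hs using
    of_mem_Ioc_one_two ha (Ioo_subset_Ioc_self hs)

theorem hasDerivAt_of_two_lt (ha : a < 1) (h : 2 < r) : HasDerivAt (hardyProfile a α γ) 0 r := by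
  refine (hasDerivAt_const r (0 : ℝ)).congr_of_eventuallyEq ?_
  filter_upwards [Ioi_mem_nhds h] with s hs using of_two_lt ha hs

theorem differentiableAt (ha : 0 < a) (ha1 : a < 1) (hr : 0 < r) (hra : r ≠ a) (hr1 : r ≠ 1)
    (hr2 : r ≠ 2) : DifferentiableAt ℝ (hardyProfile a α γ) r := by
  rcases hra.lt_or_gt with h | h
  · exact (hasDerivAt_of_lt hr h).differentiableAt
  rcases hr1.lt_or_gt with h1 | h1
  · exact (hasDerivAt_of_mem_Ioo ha ⟨h, h1⟩).differentiableAt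
  rcases hr2.lt_or_gt with h2 | h2
  · exact (hasDerivAt_of_mem_Ioo_one_two ha1 ⟨h1, h2⟩).differentiableAt
  · exact (hasDerivAt_of_two_lt ha1 h2).differentiableAt

theorem le_rpow_of_le (ha : 0 < a) (hr : 0 < r) (h : r ≤ a) (hγα : γ ≤ α) :
    hardyProfile a α γ r ≤ r ^ γ := by
  rw [of_le h]
  have hra : (r / a) ^ (α - γ) ≤ 1 :=
    Real.rpow_le_one (by positivity) ((div_le_one ha).mpr h) (sub_nonneg.mpr hγα)
  calc a ^ (γ - α) * r ^ α = r ^ γ * (r / a) ^ (α - γ) := by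
        rw [Real.div_rpow hr.le ha.le, show γ - α = -(α - γ) by ring, Real.rpow_neg ha.le,
          show α = γ + (α - γ) by ring, Real.rpow_add hr]
        ring_nf
    _ ≤ r ^ γ := mul_le_of_le_one_right (by positivity) hra

theorem sq_le (ha : 0 < a) (ha1 : a < 1) (hr : 0 < r) (hγα : γ ≤ α) :
    hardyProfile a α γ r ^ 2 ≤
      (Iic 1).indicator (fun r => r ^ (2 * γ)) r + (Iic 2).indicator 1 r := by
  rcases le_or_gt r a with h | h
  · have h1 : r ≤ 1 := by linarith
    have h2 : r ≤ 2 := by linarith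
    have hg : 0 ≤ hardyProfile a α γ r := by rw [of_le h]; positivity
    simp only [indicator_apply, mem_Iic, h1, h2, if_true, Pi.one_apply]
    rw [← Real.rpow_sq_eq hr.le]
    have := pow_le_pow_left₀ hg (le_rpow_of_le ha hr h hγα) 2
    linarith
  rcases le_or_gt r 1 with h1 | h1
  · have h2 : r ≤ 2 := by linarith
    simp [of_mem_Ioc ⟨h, h1⟩, h1, h2, Real.rpow_sq_eq hr.le]
  rcases le_or_gt r 2 with h2 | h2
  · have : (2 - r) ^ 2 ≤ 1 := by nlinarith
    simpa [of_mem_Ioc_one_two ha1 ⟨h1, h2⟩, h2, not_le.mpr h1] using this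
  · simp [of_two_lt ha1 h2, not_le.mpr h2, not_le.mpr h1]

theorem mul_indicator_le_sq (ha : 0 < a) (hr : 0 < r) :
    a ^ 2 * (Ioc a 1).indicator (fun r => r ^ (2 * γ - 2)) r ≤ hardyProfile a α γ r ^ 2 := by
  by_cases h : r ∈ Ioc a 1
  · rw [indicator_of_mem h, of_mem_Ioc h, ← Real.rpow_sq_div_sq hr]
    have har : a ^ 2 / r ^ 2 ≤ 1 :=
      div_le_one_of_le₀ (pow_le_pow_left₀ ha.le h.1.le 2) (sq_nonneg r)
    calc a ^ 2 * ((r ^ γ) ^ 2 / r ^ 2) = (r ^ γ) ^ 2 * (a ^ 2 / r ^ 2) := by ring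
      _ ≤ (r ^ γ) ^ 2 := mul_le_of_le_one_right (sq_nonneg _) har
  · rw [indicator_of_notMem h, mul_zero]
    exact sq_nonneg _

theorem sq_div_sq_le (ha : 0 < a) (ha1 : a < 1) (hr : 0 < r) :
    hardyProfile a α γ r ^ 2 / r ^ 2 ≤
      (a ^ (γ - α)) ^ 2 * (Iic a).indicator (fun r => r ^ (2 * α - 2)) r +
        (Ioc a 1).indicator (fun r => r ^ (2 * γ - 2)) r + (Iic 2).indicator 1 r := by
  rcases le_or_gt r a with h | h
  · have h2 : r ≤ 2 := by linarith
    simp [of_le h, h, h2, mul_pow, mul_div_assoc, Real.rpow_sq_div_sq hr]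
  rcases le_or_gt r 1 with h1 | h1
  · have h2 : r ≤ 2 := by linarith
    simp [of_mem_Ioc ⟨h, h1⟩, h1, h2, not_le.mpr h, h, Real.rpow_sq_div_sq hr]
  rcases le_or_gt r 2 with h2 | h2
  · have : (2 - r) ^ 2 / r ^ 2 ≤ 1 := (div_le_one (by positivity)).mpr (by nlinarith)
    simpa [of_mem_Ioc_one_two ha1 ⟨h1, h2⟩, h2, not_le.mpr h1, not_le.mpr h,
      (ha1.trans h1).not_ge] using this
  · simp [of_two_lt ha1 h2, not_le.mpr h2, not_le.mpr h1, not_le.mpr h]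

theorem deriv_sq_add_le (ha : 0 < a) (ha1 : a < 1) (hr : 0 < r) (hra : r ≠ a) (hr1 : r ≠ 1)
    (hr2 : r ≠ 2) {c : ℝ} (hαc : α ^ 2 ≤ c) :
    deriv (hardyProfile a α γ) r ^ 2 +
        (c - γ ^ 2) * (Ioc a 1).indicator (fun r => r ^ (2 * γ - 2)) r ≤
      c * (hardyProfile a α γ r ^ 2 / r ^ 2) + (Iic 2).indicator 1 r := by
  have hc : 0 ≤ c := (sq_nonneg α).trans hαc
  rcases hra.lt_or_gt with h | h
  · have hX : 0 ≤ hardyProfile a α γ r ^ 2 / r ^ 2 := by positivity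
    rw [(hasDerivAt_of_lt hr h).deriv, indicator_of_notMem (fun h' => h'.1.not_gt h),
      indicator_of_mem (mem_Iic.mpr (by linarith))]
    calc (α * hardyProfile a α γ r / r) ^ 2 + (c - γ ^ 2) * 0
        = α ^ 2 * (hardyProfile a α γ r ^ 2 / r ^ 2) := by ring
      _ ≤ c * (hardyProfile a α γ r ^ 2 / r ^ 2) + 1 := by nlinarith
  rcases hr1.lt_or_gt with h1 | h1
  · have hmem : r ∈ Ioc a 1 := ⟨h, h1.le⟩
    rw [(hasDerivAt_of_mem_Ioo ha ⟨h, h1⟩).deriv, indicator_of_mem hmem,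
      indicator_of_mem (mem_Iic.mpr (by linarith)), of_mem_Ioc hmem,
      ← Real.rpow_sq_div_sq hr]
    calc (γ * r ^ γ / r) ^ 2 + (c - γ ^ 2) * ((r ^ γ) ^ 2 / r ^ 2)
        = c * ((r ^ γ) ^ 2 / r ^ 2) := by ring
      _ ≤ c * ((r ^ γ) ^ 2 / r ^ 2) + 1 := by simp
  rcases hr2.lt_or_gt with h2 | h2
  · rw [(hasDerivAt_of_mem_Ioo_one_two ha1 ⟨h1, h2⟩).deriv,
      indicator_of_notMem (fun h' => h'.2.not_gt h1), indicator_of_mem (mem_Iic.mpr h2.le)]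
    have : 0 ≤ c * (hardyProfile a α γ r ^ 2 / r ^ 2) := by positivity
    simpa using this
  · rw [(hasDerivAt_of_two_lt ha1 h2).deriv, of_two_lt ha1 h2,
      indicator_of_notMem (fun h' => h'.2.not_gt (by linarith)),
      indicator_of_notMem (fun h' => (mem_Iic.mp h').not_gt h2)]
    simp

end hardyProfile

section WeightedPowers

variable {E : Type*} [NormedAddCommGroup E] [MeasurableSpace E] [BorelSpace E] {ν : Measure E}
  {w : E → ℝ}

def integrableSingularityExponents (ν : Measure E) (w : E → ℝ) : Set ℝ :=
  {δ | ∀ K : Set E, IsCompact K → IntegrableOn (fun x => ‖x‖ ^ (-δ) * w x) K ν}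

theorem integrableOn_norm_rpow_mul_preimage_Ioc [ProperSpace E] (hw : LocallyIntegrable w ν)
    (e : ℝ) {ρ : ℝ} (hρ : 0 < ρ) (R : ℝ) :
    IntegrableOn (fun x => ‖x‖ ^ e * w x) (norm ⁻¹' Ioc ρ R) ν := by
  have hK : IsCompact (norm ⁻¹' Icc ρ R : Set E) :=
    (isCompact_closedBall (0 : E) R).of_isClosed_subset (isClosed_Icc.preimage continuous_norm)
      fun x hx => mem_closedBall_zero_iff.mpr hx.2
  refine ((hw.integrableOn_isCompact hK).continuousOn_mul ?_ hK).mono_set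
    (preimage_mono Ioc_subset_Icc_self)
  exact continuous_norm.continuousOn.rpow_const fun x hx => Or.inl (hρ.trans_le hx.1).ne'

theorem integrableOn_norm_rpow_mul_of_le [NullSingletonClass ν] (hw : LocallyIntegrable w ν)
    {K : Set E} (hK : IsCompact K) {δ e : ℝ} (hδ : IntegrableOn (fun x => ‖x‖ ^ (-δ) * w x) K ν)
    (he : -δ ≤ e) : IntegrableOn (fun x => ‖x‖ ^ e * w x) K ν := by
  obtain ⟨R, hKR⟩ := hK.isBounded.subset_closedBall 0
  refine (hδ.norm.const_mul (R ^ (e + δ))).mono'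
    ((measurable_norm.pow_const e).aestronglyMeasurable.mul
      (hw.integrableOn_isCompact hK).aestronglyMeasurable) ?_
  filter_upwards [ae_restrict_mem hK.measurableSet, ae_restrict_of_ae (ν.ae_ne 0)] with x hxK hx
  have hr : 0 < ‖x‖ := norm_pos_iff.mpr hx
  have hpow : ‖x‖ ^ e ≤ R ^ (e + δ) * ‖x‖ ^ (-δ) := by
    calc ‖x‖ ^ e = ‖x‖ ^ (e + δ) * ‖x‖ ^ (-δ) := by rw [← Real.rpow_add hr]; ring_nf
      _ ≤ R ^ (e + δ) * ‖x‖ ^ (-δ) := by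
        gcongr
        · linarith
        · exact mem_closedBall_zero_iff.mp (hKR hxK)
  simp only [norm_mul, Real.norm_eq_abs, abs_of_nonneg (Real.rpow_nonneg (norm_nonneg x) _)]
  calc ‖x‖ ^ e * |w x| ≤ R ^ (e + δ) * ‖x‖ ^ (-δ) * |w x| := by gcongr
    _ = _ := by ring

variable {N₀ : ℝ}

theorem integrableOn_norm_rpow_mul_of_neg_lt [NullSingletonClass ν] (hw : LocallyIntegrable w ν)
    (hN₀ : IsLUB (integrableSingularityExponents ν w) N₀)
    {e : ℝ} (he : -N₀ < e) {K : Set E} (hK : IsCompact K) :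
    IntegrableOn (fun x => ‖x‖ ^ e * w x) K ν := by
  obtain ⟨δ, hδ, hδe⟩ := (lt_isLUB_iff hN₀).mp (neg_lt.mp he)
  exact integrableOn_norm_rpow_mul_of_le hw hK (hδ K hK) (by linarith)

theorem not_integrableOn_closedBall_norm_rpow_mul [ProperSpace E] (hw : LocallyIntegrable w ν)
    (hN₀ : IsLUB (integrableSingularityExponents ν w) N₀)
    {e : ℝ} (he : e < -N₀) : ¬ IntegrableOn (fun x => ‖x‖ ^ e * w x) (closedBall 0 1) ν := by
  intro h
  have hmem : -e ∈ integrableSingularityExponents ν w := fun K hK => by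
    obtain ⟨R, hKR⟩ := hK.isBounded.subset_closedBall 0
    simp only [neg_neg]
    refine (h.union (integrableOn_norm_rpow_mul_preimage_Ioc hw e one_pos R)).mono_set
      fun x hx => ?_
    by_cases hx1 : ‖x‖ ≤ 1
    · exact Or.inl (mem_closedBall_zero_iff.mpr hx1)
    · exact Or.inr ⟨not_le.mp hx1, mem_closedBall_zero_iff.mp (hKR hx)⟩
  linarith [hN₀.1 hmem]

end WeightedPowers

section RadialIntegrals

variable {E : Type*} [NormedAddCommGroup E]

theorem preimage_norm_Iic (r : ℝ) : norm ⁻¹' Iic r = closedBall (0 : E) r := by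
  ext; simp

theorem indicator_comp_norm_mul (s : Set ℝ) (F : ℝ → ℝ) (w : E → ℝ) (x : E) :
    s.indicator F ‖x‖ * w x = (norm ⁻¹' s).indicator (fun y => F ‖y‖ * w y) x := by
  by_cases hx : ‖x‖ ∈ s <;> simp [hx]

variable [MeasurableSpace E] [BorelSpace E] {ν : Measure E} {w : E → ℝ}

theorem integral_indicator_comp_norm_mul {s : Set ℝ} (hs : MeasurableSet s) (F : ℝ → ℝ) :
    ∫ x, s.indicator F ‖x‖ * w x ∂ν = ∫ x in norm ⁻¹' s, F ‖x‖ * w x ∂ν := by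
  simp_rw [indicator_comp_norm_mul s F w]
  exact integral_indicator (measurable_norm hs)

theorem integrable_indicator_comp_norm_mul_iff {s : Set ℝ} (hs : MeasurableSet s) (F : ℝ → ℝ) :
    Integrable (fun x => s.indicator F ‖x‖ * w x) ν ↔
      IntegrableOn (fun x => F ‖x‖ * w x) (norm ⁻¹' s) ν := by
  simp_rw [indicator_comp_norm_mul s F w]
  exact integrable_indicator_iff (measurable_norm hs)

theorem integral_indicator_Iic_comp_norm_mul (F : ℝ → ℝ) (R : ℝ) :
    ∫ x, (Iic R).indicator F ‖x‖ * w x ∂ν = ∫ x in closedBall 0 R, F ‖x‖ * w x ∂ν := by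
  rw [integral_indicator_comp_norm_mul measurableSet_Iic, preimage_norm_Iic]

theorem integral_indicator_Iic_one_comp_norm_mul (R : ℝ) :
    ∫ x, (Iic R).indicator 1 ‖x‖ * w x ∂ν = ∫ x in closedBall 0 R, w x ∂ν := by
  simp [integral_indicator_Iic_comp_norm_mul]

theorem integrable_indicator_Iic_comp_norm_mul {F : ℝ → ℝ} {R : ℝ}
    (hF : IntegrableOn (fun x => F ‖x‖ * w x) (closedBall 0 R) ν) :
    Integrable (fun x => (Iic R).indicator F ‖x‖ * w x) ν := by
  rwa [integrable_indicator_comp_norm_mul_iff measurableSet_Iic, preimage_norm_Iic]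

theorem integrable_indicator_Iic_one_comp_norm_mul [ProperSpace E] (hw : LocallyIntegrable w ν)
    (R : ℝ) : Integrable (fun x => (Iic R).indicator 1 ‖x‖ * w x) ν :=
  integrable_indicator_Iic_comp_norm_mul
    (by simpa using hw.integrableOn_isCompact (isCompact_closedBall 0 R))

theorem integrable_indicator_Ioc_rpow_comp_norm_mul [ProperSpace E] (hw : LocallyIntegrable w ν)
    {a : ℝ} (ha : 0 < a) (e : ℝ) :
    Integrable (fun x => (Ioc a 1).indicator (fun r => r ^ e) ‖x‖ * w x) ν :=
  (integrable_indicator_comp_norm_mul_iff measurableSet_Ioc _).mpr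
    (integrableOn_norm_rpow_mul_preimage_Ioc hw e ha 1)

theorem integrable_comp_norm_mul_of_ae_abs_le [SecondCountableTopology E] (hw0 : 0 ≤ w)
    (hw : LocallyIntegrable w ν) {F G : ℝ → ℝ} (hF : Measurable F)
    (hG : Integrable (fun x => G ‖x‖ * w x) ν) (hFG : ∀ᵐ x ∂ν, |F ‖x‖| ≤ G ‖x‖) :
    Integrable (fun x => F ‖x‖ * w x) ν := by
  refine hG.mono' ((hF.comp measurable_norm).aestronglyMeasurable.mul hw.aestronglyMeasurable) ?_
  filter_upwards [hFG] with x hx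
  rw [norm_mul, Real.norm_eq_abs, Real.norm_of_nonneg (hw0 x)]
  exact mul_le_mul_of_nonneg_right hx (hw0 x)

theorem exists_lt_setIntegral_preimage_norm_Ioc [NullSingletonClass ν] {f : E → ℝ} (hf : 0 ≤ f)
    (hint : ∀ a, 0 < a → IntegrableOn f (norm ⁻¹' Ioc a 1) ν)
    (hnot : ¬ IntegrableOn f (closedBall 0 1) ν) (T : ℝ) :
    ∃ a ∈ Ioo (0 : ℝ) 1, T < ∫ x in norm ⁻¹' Ioc a 1, f x ∂ν := by
  by_contra! hT
  set ρ : ℕ → ℝ := fun n => 1 / ((n : ℝ) + 1)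
  have hρ0 : ∀ n, 0 < ρ n := fun n => by positivity
  have hρ1 : ∀ n, 0 < n → ρ n < 1 := fun n hn =>
    (div_lt_one (by positivity)).mpr (by simpa using hn)
  have hrestrict : ∀ n, (ν.restrict (closedBall 0 1)).restrict (norm ⁻¹' Ioi (ρ n)) =
      ν.restrict (norm ⁻¹' Ioc (ρ n) 1) := fun n => by
    rw [Measure.restrict_restrict (measurableSet_Ioi.preimage continuous_norm.measurable),
      ← preimage_norm_Iic, ← preimage_inter, Ioi_inter_Iic]
  have hcover : AECover (ν.restrict (closedBall 0 1)) atTop fun n => norm ⁻¹' Ioi (ρ n) := by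
    refine ⟨ae_restrict_of_ae ?_, fun n => measurableSet_Ioi.preimage continuous_norm.measurable⟩
    filter_upwards [ν.ae_ne 0] with x hx
    exact tendsto_one_div_add_atTop_nhds_zero_nat.eventually (gt_mem_nhds (norm_pos_iff.mpr hx))
  refine hnot (hcover.integrable_of_integral_bounded_of_nonneg_ae T (fun n => ?_)
    (ae_of_all _ hf) ((eventually_gt_atTop 0).mono fun n hn => ?_))
  · rw [IntegrableOn, hrestrict]; exact hint _ (hρ0 n)
  · rw [hrestrict]; exact hT _ ⟨hρ0 n, hρ1 n hn⟩

theorem exists_lt_setIntegral_norm_rpow_mul [ProperSpace E] [NullSingletonClass ν] (hw0 : 0 ≤ w)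
    (hw : LocallyIntegrable w ν) {N₀ : ℝ} (hN₀ : IsLUB (integrableSingularityExponents ν w) N₀)
    {e : ℝ} (he : e < -N₀) (T : ℝ) :
    ∃ a ∈ Ioo (0 : ℝ) 1, T < ∫ x in norm ⁻¹' Ioc a 1, ‖x‖ ^ e * w x ∂ν :=
  exists_lt_setIntegral_preimage_norm_Ioc
    (fun x => mul_nonneg (Real.rpow_nonneg (norm_nonneg x) _) (hw0 x))
    (fun _ ha => integrableOn_norm_rpow_mul_preimage_Ioc hw e ha 1)
    (not_integrableOn_closedBall_norm_rpow_mul hw hN₀ he) T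

theorem ae_norm_notMem [NormedSpace ℝ E] [FiniteDimensional ℝ E] [Nontrivial E]
    [ν.IsAddHaarMeasure] {S : Set ℝ} (hS : S.Countable) : ∀ᵐ x ∂ν, ‖x‖ ∉ S := by
  have hsph : {x : E | ¬ ‖x‖ ∉ S} = ⋃ r ∈ S, sphere 0 r := by ext; simp
  rw [ae_iff, hsph, measure_biUnion_null_iff hS]
  exact fun r _ => Measure.addHaar_sphere ν 0 r

end RadialIntegrals

section HardyEstimates

variable {E : Type*} [NormedAddCommGroup E] [InnerProductSpace ℝ E] [FiniteDimensional ℝ E]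
  [MeasurableSpace E] [BorelSpace E] [Nontrivial E] {ν : Measure E} [ν.IsAddHaarMeasure]
  {w : E → ℝ} {a α γ : ℝ}

theorem ae_norm_pos_ne (a : ℝ) : ∀ᵐ x ∂ν, 0 < ‖x‖ ∧ ‖x‖ ≠ a ∧ ‖x‖ ≠ 1 ∧ ‖x‖ ≠ 2 := by
  filter_upwards [ae_norm_notMem (ν := ν) (toFinite {0, a, 1, 2}).countable] with x hx
  simp only [mem_insert_iff, mem_singleton_iff, not_or] at hx
  exact ⟨(norm_nonneg x).lt_of_ne' hx.1, hx.2⟩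

theorem ae_norm_gradient_hardyProfile (ha : 0 < a) (ha1 : a < 1) :
    ∀ᵐ x ∂ν, DifferentiableAt ℝ (fun y => hardyProfile a α γ ‖y‖) x ∧
      ‖gradient (fun y => hardyProfile a α γ ‖y‖) x‖ = |deriv (hardyProfile a α γ) ‖x‖| := by
  filter_upwards [ae_norm_pos_ne a] with x ⟨hr, hra, hr1, hr2⟩
  have hg := hardyProfile.differentiableAt (α := α) (γ := γ) ha ha1 hr hra hr1 hr2
  have hx : x ≠ 0 := norm_pos_iff.mp hr
  exact ⟨(hg.hasDerivAt.hasGradientAt_comp_norm hx).differentiableAt,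
    norm_gradient_comp_norm hg hx⟩

theorem integrable_hardyProfile_sq_mul (hw0 : 0 ≤ w) (hw : LocallyIntegrable w ν) (ha : 0 < a)
    (ha1 : a < 1) (hγα : γ ≤ α)
    (hQ : IntegrableOn (fun x => ‖x‖ ^ (2 * γ) * w x) (closedBall 0 1) ν) :
    Integrable (fun x => hardyProfile a α γ ‖x‖ ^ 2 * w x) ν := by
  refine integrable_comp_norm_mul_of_ae_abs_le hw0 hw ((hardyProfile.measurable a α γ).pow_const 2)
    (G := fun r => (Iic 1).indicator (fun r => r ^ (2 * γ)) r + (Iic 2).indicator 1 r) ?_ ?_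
  · exact ((integrable_indicator_Iic_comp_norm_mul hQ).add
      (integrable_indicator_Iic_one_comp_norm_mul hw 2)).congr
      (ae_of_all _ fun x => (add_mul ..).symm)
  · filter_upwards [ν.ae_ne 0] with x hx
    rw [abs_of_nonneg (sq_nonneg _)]
    exact hardyProfile.sq_le ha ha1 (norm_pos_iff.mpr hx) hγα

theorem integrable_hardyProfile_sq_div_sq_mul (hw0 : 0 ≤ w) (hw : LocallyIntegrable w ν)
    (ha : 0 < a) (ha1 : a < 1)
    (hin : IntegrableOn (fun x => ‖x‖ ^ (2 * α - 2) * w x) (closedBall 0 a) ν) :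
    Integrable (fun x => hardyProfile a α γ ‖x‖ ^ 2 / ‖x‖ ^ 2 * w x) ν := by
  refine integrable_comp_norm_mul_of_ae_abs_le hw0 hw
    (((hardyProfile.measurable a α γ).pow_const 2).div (measurable_id.pow_const 2))
    (G := fun r => (a ^ (γ - α)) ^ 2 * (Iic a).indicator (fun r => r ^ (2 * α - 2)) r +
      (Ioc a 1).indicator (fun r => r ^ (2 * γ - 2)) r + (Iic 2).indicator 1 r) ?_ ?_
  · have hin' := (integrable_indicator_Iic_comp_norm_mul (F := fun r => r ^ (2 * α - 2))
      hin).const_mul ((a ^ (γ - α)) ^ 2)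
    have hann := integrable_indicator_Ioc_rpow_comp_norm_mul hw ha (2 * γ - 2)
    exact ((hin'.add hann).add (integrable_indicator_Iic_one_comp_norm_mul hw 2)).congr
      (ae_of_all _ fun x => by simp only [Pi.add_apply]; ring)
  · filter_upwards [ν.ae_ne 0] with x hx
    rw [abs_of_nonneg (div_nonneg (sq_nonneg _) (sq_nonneg _))]
    exact hardyProfile.sq_div_sq_le ha ha1 (norm_pos_iff.mpr hx)

theorem integrable_norm_gradient_hardyProfile_sq_mul (hw0 : 0 ≤ w) (hw : LocallyIntegrable w ν)
    (ha : 0 < a) (ha1 : a < 1) {c : ℝ} (hαc : α ^ 2 ≤ c) (hγc : γ ^ 2 ≤ c)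
    (hA : Integrable (fun x => hardyProfile a α γ ‖x‖ ^ 2 / ‖x‖ ^ 2 * w x) ν) :
    Integrable (fun x => ‖gradient (fun y => hardyProfile a α γ ‖y‖) x‖ ^ 2 * w x) ν := by
  have hderiv : Integrable (fun x => deriv (hardyProfile a α γ) ‖x‖ ^ 2 * w x) ν := by
    refine integrable_comp_norm_mul_of_ae_abs_le hw0 hw ((measurable_deriv _).pow_const 2)
      (G := fun r => c * (hardyProfile a α γ r ^ 2 / r ^ 2) + (Iic 2).indicator 1 r) ?_ ?_
    · exact ((hA.const_mul c).add (integrable_indicator_Iic_one_comp_norm_mul hw 2)).congr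
        (ae_of_all _ fun x => by simp only [Pi.add_apply]; ring)
    · filter_upwards [ae_norm_pos_ne a] with x ⟨hr, hra, hr1, hr2⟩
      have hann : 0 ≤ (c - γ ^ 2) * (Ioc a 1).indicator (fun r => r ^ (2 * γ - 2)) ‖x‖ :=
        mul_nonneg (sub_nonneg.mpr hγc)
          (indicator_nonneg (fun r hr => Real.rpow_nonneg (ha.le.trans hr.1.le) _) _)
      rw [abs_of_nonneg (sq_nonneg _)]
      linarith [hardyProfile.deriv_sq_add_le (γ := γ) ha ha1 hr hra hr1 hr2 hαc]
  refine hderiv.congr ?_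
  filter_upwards [ae_norm_gradient_hardyProfile ha ha1] with x hx
  rw [hx.2, sq_abs]

theorem integral_hardyProfile_sq_mul_le (hw0 : 0 ≤ w) (hw : LocallyIntegrable w ν) (ha : 0 < a)
    (ha1 : a < 1) (hγα : γ ≤ α)
    (hQ : IntegrableOn (fun x => ‖x‖ ^ (2 * γ) * w x) (closedBall 0 1) ν) :
    ∫ x, hardyProfile a α γ ‖x‖ ^ 2 * w x ∂ν ≤
      (∫ x in closedBall 0 1, ‖x‖ ^ (2 * γ) * w x ∂ν) + ∫ x in closedBall 0 2, w x ∂ν := by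
  have hQ' := integrable_indicator_Iic_comp_norm_mul (F := fun r => r ^ (2 * γ)) hQ
  have hP := integrable_indicator_Iic_one_comp_norm_mul hw 2
  calc ∫ x, hardyProfile a α γ ‖x‖ ^ 2 * w x ∂ν
      ≤ ∫ x, ((Iic 1).indicator (fun r => r ^ (2 * γ)) ‖x‖ * w x +
          (Iic 2).indicator 1 ‖x‖ * w x) ∂ν := by
        refine integral_mono_ae (integrable_hardyProfile_sq_mul hw0 hw ha ha1 hγα hQ)
          (hQ'.add hP) ?_
        filter_upwards [ν.ae_ne 0] with x hx
        rw [← add_mul]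
        exact mul_le_mul_of_nonneg_right
          (hardyProfile.sq_le ha ha1 (norm_pos_iff.mpr hx) hγα) (hw0 x)
    _ = _ := by
        rw [integral_add hQ' hP, integral_indicator_Iic_comp_norm_mul,
          integral_indicator_Iic_one_comp_norm_mul]

theorem mul_setIntegral_le_integral_hardyProfile_sq_mul (hw0 : 0 ≤ w) (hw : LocallyIntegrable w ν)
    (ha : 0 < a) (hD : Integrable (fun x => hardyProfile a α γ ‖x‖ ^ 2 * w x) ν) :
    a ^ 2 * ∫ x in norm ⁻¹' Ioc a 1, ‖x‖ ^ (2 * γ - 2) * w x ∂ν ≤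
      ∫ x, hardyProfile a α γ ‖x‖ ^ 2 * w x ∂ν := by
  rw [← integral_indicator_comp_norm_mul measurableSet_Ioc (fun r => r ^ (2 * γ - 2)),
    ← integral_const_mul]
  refine integral_mono_ae ((integrable_indicator_Ioc_rpow_comp_norm_mul hw ha _).const_mul _) hD ?_
  filter_upwards [ν.ae_ne 0] with x hx
  rw [← mul_assoc]
  exact mul_le_mul_of_nonneg_right
    (hardyProfile.mul_indicator_le_sq ha (norm_pos_iff.mpr hx)) (hw0 x)

theorem integral_norm_gradient_hardyProfile_sq_mul_add_le (hw0 : 0 ≤ w)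
    (hw : LocallyIntegrable w ν) (ha : 0 < a) (ha1 : a < 1) {c : ℝ} (hαc : α ^ 2 ≤ c)
    (hB : Integrable (fun x => ‖gradient (fun y => hardyProfile a α γ ‖y‖) x‖ ^ 2 * w x) ν)
    (hA : Integrable (fun x => hardyProfile a α γ ‖x‖ ^ 2 / ‖x‖ ^ 2 * w x) ν) :
    (∫ x, ‖gradient (fun y => hardyProfile a α γ ‖y‖) x‖ ^ 2 * w x ∂ν) +
        (c - γ ^ 2) * ∫ x in norm ⁻¹' Ioc a 1, ‖x‖ ^ (2 * γ - 2) * w x ∂ν ≤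
      c * (∫ x, hardyProfile a α γ ‖x‖ ^ 2 / ‖x‖ ^ 2 * w x ∂ν) +
        ∫ x in closedBall 0 2, w x ∂ν := by
  have hM := (integrable_indicator_Ioc_rpow_comp_norm_mul hw ha (2 * γ - 2)).const_mul (c - γ ^ 2)
  have hP := integrable_indicator_Iic_one_comp_norm_mul hw 2
  rw [← integral_indicator_comp_norm_mul measurableSet_Ioc (fun r => r ^ (2 * γ - 2)),
    ← integral_const_mul, ← integral_const_mul, ← integral_indicator_Iic_one_comp_norm_mul,
    ← integral_add hB hM, ← integral_add (hA.const_mul c) hP]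
  refine integral_mono_ae (hB.add hM) ((hA.const_mul c).add hP) ?_
  filter_upwards [ae_norm_gradient_hardyProfile ha ha1, ae_norm_pos_ne a]
    with x hx ⟨hr, hra, hr1, hr2⟩
  rw [hx.2, sq_abs]
  calc _ = (deriv (hardyProfile a α γ) ‖x‖ ^ 2 +
        (c - γ ^ 2) * (Ioc a 1).indicator (fun r => r ^ (2 * γ - 2)) ‖x‖) * w x := by ring
    _ ≤ (c * (hardyProfile a α γ ‖x‖ ^ 2 / ‖x‖ ^ 2) + (Iic 2).indicator 1 ‖x‖) * w x :=
        mul_le_mul_of_nonneg_right (hardyProfile.deriv_sq_add_le ha ha1 hr hra hr1 hr2 hαc) (hw0 x)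
    _ = _ := by ring

theorem not_hardy_inequality_hardyProfile (hw0 : 0 ≤ w) (hw : LocallyIntegrable w ν) (ha : 0 < a)
    (ha1 : a < 1) (hγα : γ ≤ α) {c C : ℝ} (hαc : α ^ 2 ≤ c)
    (hQ : IntegrableOn (fun x => ‖x‖ ^ (2 * γ) * w x) (closedBall 0 1) ν)
    (hB : Integrable (fun x => ‖gradient (fun y => hardyProfile a α γ ‖y‖) x‖ ^ 2 * w x) ν)
    (hA : Integrable (fun x => hardyProfile a α γ ‖x‖ ^ 2 / ‖x‖ ^ 2 * w x) ν)
    (hM : (∫ x in closedBall 0 2, w x ∂ν) + max C 0 * ((∫ x in closedBall 0 1,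
        ‖x‖ ^ (2 * γ) * w x ∂ν) + ∫ x in closedBall 0 2, w x ∂ν) <
      (∫ x in norm ⁻¹' Ioc a 1, ‖x‖ ^ (2 * γ - 2) * w x ∂ν) * (c - γ ^ 2)) :
    ¬ (c * (∫ x, hardyProfile a α γ ‖x‖ ^ 2 / ‖x‖ ^ 2 * w x ∂ν) ≤
      (∫ x, ‖gradient (fun y => hardyProfile a α γ ‖y‖) x‖ ^ 2 * w x ∂ν) +
        C * ∫ x, hardyProfile a α γ ‖x‖ ^ 2 * w x ∂ν) := by
  intro hle
  have hD0 : 0 ≤ ∫ x, hardyProfile a α γ ‖x‖ ^ 2 * w x ∂ν :=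
    integral_nonneg fun x => mul_nonneg (sq_nonneg _) (hw0 x)
  have hDle := integral_hardyProfile_sq_mul_le hw0 hw ha ha1 hγα hQ
  have hgap := integral_norm_gradient_hardyProfile_sq_mul_add_le hw0 hw ha ha1 hαc hB hA
  have hCD := (mul_le_mul_of_nonneg_right (le_max_left C 0) hD0).trans
    (mul_le_mul_of_nonneg_left hDle (le_max_right C 0))
  linarith

end HardyEstimates

/-- Optimality of the Hardy constant: if `N₀ = sup{δ : |x|^{-δ} ∈ L¹_loc(dμ)}` and
`c > c₀(N₀) = ((N₀-2)/2)²`, then the weighted Hardy inequality with constant `c`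
fails for every `C`; i.e. the Rayleigh quotient is unbounded below on `H¹_μ`. -/
theorem hardy_fails_above_optimal_constant (N : ℕ) (hN : 1 ≤ N)
    (μ : EuclideanSpace ℝ (Fin N) → ℝ) (hμ : ∀ x, 0 ≤ μ x)
    (hloc : ∀ K : Set (EuclideanSpace ℝ (Fin N)), IsCompact K → IntegrableOn μ K)
    (N₀ : ℝ)
    (hN₀ : IsLUB {δ : ℝ | ∀ K : Set (EuclideanSpace ℝ (Fin N)), IsCompact K →
      IntegrableOn (fun x => ‖x‖ ^ (-δ) * μ x) K} N₀)
    (c : ℝ) (hc : ((N₀ - 2) / 2) ^ 2 < c) :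
    ∀ C : ℝ, ∃ φ : EuclideanSpace ℝ (Fin N) → ℝ,
      (∀ᵐ x : EuclideanSpace ℝ (Fin N), DifferentiableAt ℝ φ x) ∧
      Integrable (fun x => φ x ^ 2 * μ x) ∧
      Integrable (fun x => ‖gradient φ x‖ ^ 2 * μ x) ∧
      Integrable (fun x => φ x ^ 2 / ‖x‖ ^ 2 * μ x) ∧
      0 < ∫ x, φ x ^ 2 * μ x ∧
      ¬ (c * (∫ x, φ x ^ 2 / ‖x‖ ^ 2 * μ x) ≤
          (∫ x, ‖gradient φ x‖ ^ 2 * μ x) + C * ∫ x, φ x ^ 2 * μ x) := by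
  intro C
  have : Nonempty (Fin N) := ⟨⟨0, hN⟩⟩
  have hw : LocallyIntegrable μ := locallyIntegrable_iff.mpr hloc
  obtain ⟨γ, α, hγ₀, hγ₁, hα₁, hγc, hαc⟩ := exists_exponents_of_sq_lt hc
  have hγα : γ ≤ α := by linarith
  have hQ := integrableOn_norm_rpow_mul_of_neg_lt hw hN₀ (e := 2 * γ) (by linarith)
    (isCompact_closedBall 0 1)
  set Q := ∫ x in closedBall 0 1, ‖x‖ ^ (2 * γ) * μ x
  set P := ∫ x in closedBall (0 : EuclideanSpace ℝ (Fin N)) 2, μ x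
  obtain ⟨a, ⟨ha, ha1⟩, hM⟩ := exists_lt_setIntegral_norm_rpow_mul hμ hw hN₀
    (e := 2 * γ - 2) (by linarith) (max 0 ((P + max C 0 * (Q + P)) / (c - γ ^ 2)))
  rw [max_lt_iff, div_lt_iff₀ (by linarith)] at hM
  have hin := integrableOn_norm_rpow_mul_of_neg_lt hw hN₀ (e := 2 * α - 2) (by linarith)
    (isCompact_closedBall 0 a)
  have hD := integrable_hardyProfile_sq_mul hμ hw ha ha1 hγα hQ
  have hA := integrable_hardyProfile_sq_div_sq_mul (γ := γ) hμ hw ha ha1 hin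
  have hB := integrable_norm_gradient_hardyProfile_sq_mul hμ hw ha ha1 hαc.le hγc.le hA
  refine ⟨_, (ae_norm_gradient_hardyProfile ha ha1).mono fun x hx => hx.1, hD, hB, hA,
    (mul_pos (pow_pos ha 2) hM.1).trans_le
      (mul_setIntegral_le_integral_hardyProfile_sq_mul hμ hw ha hD),
    not_hardy_inequality_hardyProfile hμ hw ha ha1 hγα hαc.le hQ hB hA hM.2⟩
end
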